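/- Let p be a prime and G a finite group acting on a finite abelian p-group M. An element of H^1_loc(G, M) is zero if and only if its restriction to H^1_loc(G_p, M) is zero, where G_p is a p-Sylow subgroup of G. -/

import Mathlib

/-!
Shift a local trivialization `A` on `P` away, so that the cocycle vanishes on `P`. A cocycle
vanishing on `P` is constant on left cosets of `P`, and summing it over coset representatives
(the corestriction of the restriction) shows that `[G : P] • Z` is a coboundary. Since `[G : P]`
is prime to `p`, multiplication by it is bijective on the `p`-group `M`, so `Z` itself is one.
-/

namespace groupCohomology

variable {G A : Type*} [Group G] [AddCommGroup A] [DistribMulAction G A]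

theorem IsCocycle₁.sub_coboundary {f : G → A} (hf : IsCocycle₁ f) (x : A) :
    IsCocycle₁ fun g => f g - (g • x - x) := by
  intro g h
  simp only [hf g h, mul_smul, smul_sub]
  abel

theorem IsCoboundary₁.of_sub_coboundary {f : G → A} {x : A}
    (hf : IsCoboundary₁ fun g => f g - (g • x - x)) : IsCoboundary₁ f := by
  obtain ⟨y, hy⟩ := hf
  exact ⟨y + x, fun g => by rw [smul_add, add_sub_add_comm, hy g, sub_add_cancel]⟩

theorem IsCocycle₁.map_out_mk {f : G → A} (hf : IsCocycle₁ f) {H : Subgroup G}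
    (hH : ∀ h ∈ H, f h = 0) (g : G) : f (g : G ⧸ H).out = f g := by
  obtain ⟨h, hout⟩ := QuotientGroup.mk_out_eq_mul H g
  rw [hout, hf, hH h h.2, smul_zero, zero_add]

theorem IsCocycle₁.isCoboundary₁_index_nsmul {f : G → A} (hf : IsCocycle₁ f) {H : Subgroup G}
    [H.FiniteIndex] (hH : ∀ h ∈ H, f h = 0) : IsCoboundary₁ fun g => H.index • f g := by
  have := Fintype.ofFinite (G ⧸ H)
  set B := ∑ q : G ⧸ H, f q.out
  have hB (g : G) : g • B = B - H.index • f g :=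
    calc g • B = ∑ q : G ⧸ H, (f (g * q.out) - f g) := by
          refine Finset.smul_sum.trans (Finset.sum_congr rfl fun q _ => ?_)
          rw [hf, add_sub_cancel_right]
      _ = ∑ q : G ⧸ H, f (g • q).out - H.index • f g := by
          simp only [Finset.sum_sub_distrib, Finset.sum_const, Finset.card_univ,
            H.index_eq_card, Nat.card_eq_fintype_card, ← MulAction.Quotient.mk_smul_out,
            hf.map_out_mk hH, smul_eq_mul]
      _ = B - H.index • f g := by
          rw [show ∑ q : G ⧸ H, f (g • q).out = B from
            Equiv.sum_comp (MulAction.toPerm g) fun q : G ⧸ H => f q.out]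
  exact ⟨-B, fun g => by rw [smul_neg, hB]; abel⟩

theorem IsCoboundary₁.of_nsmul [Finite A] {f : G → A} {n : ℕ} (hn : (Nat.card A).Coprime n)
    (hf : IsCoboundary₁ fun g => n • f g) : IsCoboundary₁ f := by
  obtain ⟨x, hx⟩ := hf
  obtain ⟨y, hy⟩ := hn.nsmul_right_bijective.surjective x
  refine ⟨y, fun g => hn.nsmul_right_bijective.injective ?_⟩
  simp only [← hx g, ← hy, smul_sub, smul_comm g n y]

end groupCohomology

open groupCohomology in
theorem h1loc_zero_iff_sylow_general {G M : Type*} [Group G] [Finite G]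
    [AddCommGroup M] [Finite M] [DistribMulAction G M]
    (p : ℕ) (hp : p.Prime) (hM : ∃ k : ℕ, Nat.card M = p ^ k)
    (P : Sylow p G)
    (Z : G → M) (hZ : ∀ σ τ : G, Z (σ * τ) = Z σ + σ • Z τ) :
    (∃ A : M, ∀ σ : G, Z σ = σ • A - A) ↔
      (∃ A : M, ∀ σ ∈ (P : Subgroup G), Z σ = σ • A - A) := by
  refine ⟨fun ⟨A, hA⟩ => ⟨A, fun σ _ => hA σ⟩, fun ⟨A, hA⟩ => ?_⟩
  have : Fact p.Prime := ⟨hp⟩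
  have hcocycle : IsCocycle₁ Z := fun σ τ => by rw [hZ, add_comm]
  have hvanish : ∀ σ ∈ (P : Subgroup G), Z σ - (σ • A - A) = 0 := fun σ hσ => by
    rw [hA σ hσ, sub_self]
  have hcoprime : (Nat.card M).Coprime (P : Subgroup G).index := by
    obtain ⟨k, hk⟩ := hM
    exact hk ▸ Nat.Coprime.pow_left k (hp.coprime_iff_not_dvd.mpr P.not_dvd_index)
  obtain ⟨C, hC⟩ := IsCoboundary₁.of_sub_coboundary <| IsCoboundary₁.of_nsmul hcoprime <|
    (hcocycle.sub_coboundary A).isCoboundary₁_index_nsmul hvanish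
  exact ⟨C, fun σ => (hC σ).symm⟩

/-- Sylow restriction lemma: for a finite group G acting on a finite abelian
p-group M and a cocycle Z satisfying the local conditions, the class of Z in
H¹_loc(G,M) is zero iff its restriction to a p-Sylow subgroup G_p is zero in
H¹_loc(G_p,M). -/
theorem h1loc_zero_iff_sylow {G M : Type*} [Group G] [Finite G]
    [AddCommGroup M] [Finite M] [DistribMulAction G M]
    (p : ℕ) (hp : p.Prime) (hM : ∃ k : ℕ, Nat.card M = p ^ k)
    (P : Sylow p G)
    (Z : G → M) (hZ : ∀ σ τ : G, Z (σ * τ) = Z σ + σ • Z τ)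
    (hloc : ∀ σ : G, ∃ A : M, Z σ = σ • A - A) :
    (∃ A : M, ∀ σ : G, Z σ = σ • A - A) ↔
      (∃ A : M, ∀ σ ∈ (P : Subgroup G), Z σ = σ • A - A) :=
  h1loc_zero_iff_sylow_general p hp hM P Z hZ
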